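/- Let Q be symmetric positive definite, J : ℝⁿ → ℝ^{n×n} with J(z)ᵀ = -J(z), and suppose z ↦ J(z)Q is Lipschitz with constant L w.r.t. the Q-norm on the ball B(y₀; 2‖y₀‖_Q). Then Φ_h(x) = C((h/2)J((y₀+x)/2)Q)y₀ satisfies ‖Φ_h(x) - Φ_h(x')‖_Q ≤ (h L ‖y₀‖_Q / 2)·‖x - x'‖_Q for all x, x' in that ball. -/

import Mathlib

open Matrix

/-- The `Q`-norm of a vector, `‖x‖_Q = √(xᵀ Q x)`. -/
noncomputable def qnorm {n : ℕ} (Q : Matrix (Fin n) (Fin n) ℝ) (x : Fin n → ℝ) : ℝ :=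
  Real.sqrt (x ⬝ᵥ Q.mulVec x)

/-- The operator norm on `ℝ^{n×n}` induced by the `Q`-norm. -/
noncomputable def qOpNorm {n : ℕ} (Q M : Matrix (Fin n) (Fin n) ℝ) : ℝ :=
  sInf {c : ℝ | 0 ≤ c ∧ ∀ x : Fin n → ℝ, qnorm Q (M.mulVec x) ≤ c * qnorm Q x}

/-- The Cayley transform `C(A) = (I - A)⁻¹ (I + A)`. -/
noncomputable def cayley {n : ℕ} (A : Matrix (Fin n) (Fin n) ℝ) : Matrix (Fin n) (Fin n) ℝ :=
  (1 - A)⁻¹ * (1 + A)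

/-- The midpoint-rule fixed point map `Φ_h(x) = C((h/2) J((y₀+x)/2) Q) y₀`. -/
noncomputable def Phi {n : ℕ} (Q : Matrix (Fin n) (Fin n) ℝ)
    (J : (Fin n → ℝ) → Matrix (Fin n) (Fin n) ℝ) (y₀ : Fin n → ℝ) (h : ℝ)
    (x : Fin n → ℝ) : Fin n → ℝ :=
  (cayley ((h / 2) • (J ((1 / 2 : ℝ) • (y₀ + x)) * Q))).mulVec y₀

/-!
For `A` in the quadratic Lie algebra `g_Q = {A | Aᵀ Q = -Q A}` the cross term of
`‖(1 - A) u‖²_Q` vanishes, so `‖(1 - A) u‖_Q ≥ ‖u‖_Q` and `(1 - A)⁻¹` is a `Q`-contraction.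
Writing `C(A) = 2 (1 - A)⁻¹ - 1` gives `C(A) - C(A') = 2 (1 - A)⁻¹ (A - A') (1 - A')⁻¹`, so the
Cayley transform is `2`-Lipschitz on `g_Q`. Skewness of `J` puts `(h/2) J(z) Q` in `g_Q`, the
midpoints `z = (y₀ + x)/2` stay in the ball, and `‖z - z'‖_Q = ‖x - x'‖_Q / 2`.
-/

section

variable {n : ℕ}

lemma qnorm_nonneg (Q : Matrix (Fin n) (Fin n) ℝ) (x : Fin n → ℝ) : 0 ≤ qnorm Q x :=
  Real.sqrt_nonneg _

lemma qnorm_smul (Q : Matrix (Fin n) (Fin n) ℝ) (c : ℝ) (x : Fin n → ℝ) :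
    qnorm Q (c • x) = |c| * qnorm Q x := by
  have hquad : c • x ⬝ᵥ Q *ᵥ (c • x) = c ^ 2 * (x ⬝ᵥ Q *ᵥ x) := by
    simp only [mulVec_smul, smul_dotProduct, dotProduct_smul, smul_eq_mul]
    ring
  rw [qnorm, hquad, Real.sqrt_mul (sq_nonneg c), Real.sqrt_sq_eq_abs, qnorm]

lemma qnorm_half_smul (Q : Matrix (Fin n) (Fin n) ℝ) (x : Fin n → ℝ) :
    qnorm Q ((1 / 2 : ℝ) • x) = qnorm Q x / 2 := by
  rw [qnorm_smul, abs_of_pos one_half_pos]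
  ring

lemma qnorm_midpoint_sub_midpoint (Q : Matrix (Fin n) (Fin n) ℝ) (y x x' : Fin n → ℝ) :
    qnorm Q ((1 / 2 : ℝ) • (y + x) - (1 / 2 : ℝ) • (y + x')) = qnorm Q (x - x') / 2 := by
  rw [← qnorm_half_smul]
  congr 1
  module

lemma qnorm_midpoint_sub_le {Q : Matrix (Fin n) (Fin n) ℝ} {y x : Fin n → ℝ} {r : ℝ}
    (hx : qnorm Q (x - y) ≤ r) :
    qnorm Q ((1 / 2 : ℝ) • (y + x) - y) ≤ r := by
  have hmid : (1 / 2 : ℝ) • (y + x) - y = (1 / 2 : ℝ) • (x - y) := by module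
  rw [hmid, qnorm_half_smul]
  linarith [qnorm_nonneg Q (x - y)]

lemma qOpNorm_nonneg (Q M : Matrix (Fin n) (Fin n) ℝ) : 0 ≤ qOpNorm Q M :=
  Real.sInf_nonneg fun _ hc => hc.1

end

namespace Matrix

variable {n : ℕ} {Q A A' : Matrix (Fin n) (Fin n) ℝ}

lemma PosDef.eq_zero_of_qnorm_eq_zero (hQ : Q.PosDef) {x : Fin n → ℝ} (hx : qnorm Q x = 0) :
    x = 0 := by
  by_contra hne
  have hpos : 0 < qnorm Q x := Real.sqrt_pos.mpr (by simpa using hQ.dotProduct_mulVec_pos hne)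
  exact hpos.ne' hx

open scoped MatrixOrder in
lemma PosSemidef.qnorm_eq_norm_sqrt_mulVec (hQ : Q.PosSemidef) (x : Fin n → ℝ) :
    qnorm Q x = ‖WithLp.toLp 2 (CFC.sqrt Q *ᵥ x)‖ := by
  set S := CFC.sqrt Q
  have hS : Sᵀ = S := by
    simpa using (nonneg_iff_posSemidef.mp (CFC.sqrt_nonneg Q)).isHermitian.eq
  have hSS : S * S = Q := CFC.sqrt_mul_sqrt_self Q (nonneg_iff_posSemidef.mpr hQ)
  have hquad : x ⬝ᵥ Q *ᵥ x = S *ᵥ x ⬝ᵥ S *ᵥ x := by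
    rw [← hSS, ← mulVec_mulVec, dotProduct_mulVec, ← mulVec_transpose, hS]
  rw [qnorm, hquad, EuclideanSpace.norm_eq]
  simp [dotProduct, pow_two]

open scoped Matrix.Norms.L2Operator MatrixOrder in
lemma PosDef.exists_qnorm_mulVec_le (hQ : Q.PosDef) (M : Matrix (Fin n) (Fin n) ℝ) :
    ∃ c : ℝ, 0 ≤ c ∧ ∀ x, qnorm Q (M *ᵥ x) ≤ c * qnorm Q x := by
  set S := CFC.sqrt Q
  have hSS : S * S = Q := CFC.sqrt_mul_sqrt_self Q (nonneg_iff_posSemidef.mpr hQ.posSemidef)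
  have hS : IsUnit S.det := by
    refine isUnit_iff_ne_zero.mpr fun h0 => hQ.det_pos.ne' ?_
    rw [← hSS, det_mul, h0, mul_zero]
  -- `‖x‖_Q = ‖S x‖₂` with `S = √Q`, so `M` is `Q`-bounded by the `ℓ²` operator norm of `S M S⁻¹`
  refine ⟨‖S * M * S⁻¹‖, norm_nonneg _, fun x => ?_⟩
  have hconj : S *ᵥ (M *ᵥ x) = (S * M * S⁻¹) *ᵥ (S *ᵥ x) := by
    rw [mulVec_mulVec, mulVec_mulVec, Matrix.mul_assoc _ S⁻¹, nonsing_inv_mul _ hS, Matrix.mul_one]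
  rw [hQ.posSemidef.qnorm_eq_norm_sqrt_mulVec, hQ.posSemidef.qnorm_eq_norm_sqrt_mulVec, hconj]
  simpa using l2_opNorm_mulVec (S * M * S⁻¹) (WithLp.toLp 2 (S *ᵥ x))

lemma PosDef.qnorm_mulVec_le_qOpNorm (hQ : Q.PosDef) (M : Matrix (Fin n) (Fin n) ℝ)
    (x : Fin n → ℝ) : qnorm Q (M *ᵥ x) ≤ qOpNorm Q M * qnorm Q x := by
  obtain ⟨c, hc0, hc⟩ := hQ.exists_qnorm_mulVec_le M
  rcases (qnorm_nonneg Q x).eq_or_lt with hx | hx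
  · simpa [← hx] using hc x
  · rw [← div_le_iff₀ hx]
    refine le_csInf ⟨c, hc0, hc⟩ fun b hb => ?_
    rw [div_le_iff₀ hx]
    exact hb.2 x

lemma isSkewAdjoint_mul_of_transpose_eq_neg {B : Matrix (Fin n) (Fin n) ℝ} (hQ : Q.IsSymm)
    (hB : Bᵀ = -B) : Matrix.IsSkewAdjoint Q (B * Q) := by
  rw [Matrix.IsSkewAdjoint, IsAdjointPair, transpose_mul, hQ.eq, hB]
  noncomm_ring

lemma IsSkewAdjoint.smul (hA : Matrix.IsSkewAdjoint Q A) (c : ℝ) :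
    Matrix.IsSkewAdjoint Q (c • A) := by
  rw [Matrix.IsSkewAdjoint, IsAdjointPair] at hA ⊢
  rw [transpose_smul, Matrix.smul_mul, hA, Matrix.mul_neg, Matrix.mul_neg, Matrix.mul_smul,
    smul_neg]

lemma IsSkewAdjoint.mulVec_dotProduct_mulVec_self (hQ : Q.IsSymm) (hA : Matrix.IsSkewAdjoint Q A)
    (u : Fin n → ℝ) : A *ᵥ u ⬝ᵥ Q *ᵥ u = 0 := by
  have hA' : Aᵀ * Q = Q * -A := hA
  have hneg : A *ᵥ u ⬝ᵥ Q *ᵥ u = -(A *ᵥ u ⬝ᵥ Q *ᵥ u) :=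
    calc A *ᵥ u ⬝ᵥ Q *ᵥ u = u ⬝ᵥ (Aᵀ * Q) *ᵥ u := by
          rw [← mulVec_mulVec, mulVec_transpose, dotProduct_comm u, ← dotProduct_mulVec,
            dotProduct_comm]
      _ = -(A *ᵥ u ⬝ᵥ Q *ᵥ u) := by
          rw [hA', Matrix.mul_neg, neg_mulVec, dotProduct_neg, ← mulVec_mulVec,
            dotProduct_mulVec, ← mulVec_transpose, hQ.eq, dotProduct_comm]
  linarith

lemma IsSkewAdjoint.qnorm_le_qnorm_one_sub_mulVec (hQ : Q.PosDef) (hA : Matrix.IsSkewAdjoint Q A)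
    (u : Fin n → ℝ) : qnorm Q u ≤ qnorm Q ((1 - A) *ᵥ u) := by
  have hQs : Q.IsSymm := isHermitian_iff_isSymm.mp hQ.isHermitian
  have hcross : u ⬝ᵥ Q *ᵥ (A *ᵥ u) = 0 := by
    rw [dotProduct_mulVec, ← mulVec_transpose, hQs.eq, dotProduct_comm,
      hA.mulVec_dotProduct_mulVec_self hQs]
  have hpyth : (1 - A) *ᵥ u ⬝ᵥ Q *ᵥ ((1 - A) *ᵥ u) = u ⬝ᵥ Q *ᵥ u + A *ᵥ u ⬝ᵥ Q *ᵥ (A *ᵥ u) := by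
    rw [sub_mulVec, one_mulVec, sub_dotProduct, mulVec_sub, dotProduct_sub, dotProduct_sub,
      hcross, hA.mulVec_dotProduct_mulVec_self hQs]
    ring
  refine Real.sqrt_le_sqrt ?_
  rw [hpyth]
  simpa using hQ.posSemidef.dotProduct_mulVec_nonneg (A *ᵥ u)

lemma IsSkewAdjoint.isUnit_one_sub (hQ : Q.PosDef) (hA : Matrix.IsSkewAdjoint Q A) :
    IsUnit (1 - A) := by
  refine mulVec_injective_iff_isUnit.mp fun u v huv =>
    sub_eq_zero.mp (hQ.eq_zero_of_qnorm_eq_zero ?_)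
  refine le_antisymm ?_ (qnorm_nonneg Q _)
  simpa [mulVec_sub, huv, qnorm] using hA.qnorm_le_qnorm_one_sub_mulVec hQ (u - v)

lemma IsSkewAdjoint.qnorm_inv_one_sub_mulVec_le (hQ : Q.PosDef) (hA : Matrix.IsSkewAdjoint Q A)
    (y : Fin n → ℝ) : qnorm Q ((1 - A)⁻¹ *ᵥ y) ≤ qnorm Q y := by
  have hdet : IsUnit (1 - A).det := (isUnit_iff_isUnit_det _).mp (hA.isUnit_one_sub hQ)
  have hcancel : (1 - A) *ᵥ ((1 - A)⁻¹ *ᵥ y) = y := by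
    rw [mulVec_mulVec, mul_nonsing_inv _ hdet, one_mulVec]
  calc qnorm Q ((1 - A)⁻¹ *ᵥ y) ≤ qnorm Q ((1 - A) *ᵥ ((1 - A)⁻¹ *ᵥ y)) :=
        hA.qnorm_le_qnorm_one_sub_mulVec hQ _
    _ = qnorm Q y := by rw [hcancel]

lemma cayley_eq_two_smul_inv_sub_one (hA : IsUnit (1 - A)) :
    cayley A = (2 : ℝ) • (1 - A)⁻¹ - 1 := by
  have hdet : IsUnit (1 - A).det := (isUnit_iff_isUnit_det _).mp hA
  have hsplit : 1 + A = (2 : ℝ) • 1 - (1 - A) := by rw [two_smul]; abel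
  rw [cayley, hsplit, Matrix.mul_sub, Matrix.mul_smul, Matrix.mul_one, nonsing_inv_mul _ hdet]

lemma cayley_sub_cayley (hA : IsUnit (1 - A)) (hA' : IsUnit (1 - A')) :
    cayley A - cayley A' = (2 : ℝ) • ((1 - A)⁻¹ * (A - A') * (1 - A')⁻¹) := by
  rw [cayley_eq_two_smul_inv_sub_one hA, cayley_eq_two_smul_inv_sub_one hA',
    sub_sub_sub_cancel_right, ← smul_sub, inv_sub_inv (iff_of_true hA hA'),
    sub_sub_sub_cancel_left]

lemma qnorm_cayley_sub_cayley_mulVec_le (hQ : Q.PosDef) (hA : Matrix.IsSkewAdjoint Q A)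
    (hA' : Matrix.IsSkewAdjoint Q A') {c : ℝ} (hc0 : 0 ≤ c)
    (hc : ∀ w, qnorm Q ((A - A') *ᵥ w) ≤ c * qnorm Q w) (y : Fin n → ℝ) :
    qnorm Q ((cayley A - cayley A') *ᵥ y) ≤ 2 * c * qnorm Q y := by
  rw [cayley_sub_cayley (hA.isUnit_one_sub hQ) (hA'.isUnit_one_sub hQ), smul_mulVec, qnorm_smul,
    abs_two, ← mulVec_mulVec, ← mulVec_mulVec]
  calc 2 * qnorm Q ((1 - A)⁻¹ *ᵥ ((A - A') *ᵥ ((1 - A')⁻¹ *ᵥ y)))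
      ≤ 2 * qnorm Q ((A - A') *ᵥ ((1 - A')⁻¹ *ᵥ y)) := by
        gcongr; exact hA.qnorm_inv_one_sub_mulVec_le hQ _
    _ ≤ 2 * (c * qnorm Q ((1 - A')⁻¹ *ᵥ y)) := by gcongr; exact hc _
    _ ≤ 2 * (c * qnorm Q y) := by gcongr; exact hA'.qnorm_inv_one_sub_mulVec_le hQ y
    _ = 2 * c * qnorm Q y := by ring

end Matrix

/-- If `z ↦ J(z)Q` is Lipschitz with constant `L` (w.r.t. the `Q`-norms) on the
ball `B(y₀; 2‖y₀‖_Q)`, then `Φ_h` is Lipschitz there with constant `hL‖y₀‖_Q/2`. -/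
theorem stmt17 {n : ℕ} (Q : Matrix (Fin n) (Fin n) ℝ) (hQ : Q.PosDef)
    (J : (Fin n → ℝ) → Matrix (Fin n) (Fin n) ℝ) (hJ : ∀ z, (J z)ᵀ = -(J z))
    (y₀ : Fin n → ℝ) (h : ℝ) (hh : 0 < h) (L : ℝ)
    (hLip : ∀ z z' : Fin n → ℝ,
      qnorm Q (z - y₀) ≤ 2 * qnorm Q y₀ → qnorm Q (z' - y₀) ≤ 2 * qnorm Q y₀ →
      qOpNorm Q (J z * Q - J z' * Q) ≤ L * qnorm Q (z - z')) :
    ∀ x x' : Fin n → ℝ,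
      qnorm Q (x - y₀) ≤ 2 * qnorm Q y₀ → qnorm Q (x' - y₀) ≤ 2 * qnorm Q y₀ →
      qnorm Q (Phi Q J y₀ h x - Phi Q J y₀ h x') ≤
        (h * L * qnorm Q y₀ / 2) * qnorm Q (x - x') := by
  intro x x' hx hx'
  set z := (1 / 2 : ℝ) • (y₀ + x)
  set z' := (1 / 2 : ℝ) • (y₀ + x')
  set M := J z * Q - J z' * Q
  have hQs : Q.IsSymm := isHermitian_iff_isSymm.mp hQ.isHermitian
  have hskew : ∀ w, Matrix.IsSkewAdjoint Q ((h / 2) • (J w * Q)) := fun w =>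
    (isSkewAdjoint_mul_of_transpose_eq_neg hQs (hJ w)).smul _
  have hM : ∀ w, qnorm Q (((h / 2) • (J z * Q) - (h / 2) • (J z' * Q)) *ᵥ w)
      ≤ h / 2 * qOpNorm Q M * qnorm Q w := fun w => by
    rw [← smul_sub, smul_mulVec, qnorm_smul, abs_of_pos (half_pos hh), mul_assoc]
    exact mul_le_mul_of_nonneg_left (hQ.qnorm_mulVec_le_qOpNorm M w) (half_pos hh).le
  calc qnorm Q (Phi Q J y₀ h x - Phi Q J y₀ h x')
      = qnorm Q ((cayley ((h / 2) • (J z * Q)) - cayley ((h / 2) • (J z' * Q))) *ᵥ y₀) := by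
        rw [Phi, Phi, sub_mulVec]
    _ ≤ 2 * (h / 2 * qOpNorm Q M) * qnorm Q y₀ :=
        qnorm_cayley_sub_cayley_mulVec_le hQ (hskew z) (hskew z')
          (mul_nonneg (half_pos hh).le (qOpNorm_nonneg Q M)) hM y₀
    _ ≤ 2 * (h / 2 * (L * qnorm Q (z - z'))) * qnorm Q y₀ := by
        gcongr
        · exact qnorm_nonneg Q y₀
        · exact hLip z z' (qnorm_midpoint_sub_le hx) (qnorm_midpoint_sub_le hx')
    _ = h * L * qnorm Q y₀ / 2 * qnorm Q (x - x') := by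
        rw [qnorm_midpoint_sub_midpoint]
        ring
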